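/- In the weighted bipartite matching formulation, let M be the unique maximum-weight saturated matching on all n items and let M_i be the unique maximum-weight saturated matching on the first i items. If every item matched by M arrives after position i₀, and an algorithm retains each item c_j (j > i₀) whenever c_j is matched in M_j, then every item matched by M is retained. -/

import Mathlib

/-!
Suppose `c` is matched by `M n` (to `l₀`, say) but not by `M j`, where `j = c + 1`.
Follow the alternating path of `M n △ M j` starting with the edge `l₀ — c` and swap the two
matchings along it. Since `c` is the latest item on the path, the `M n`-items that move into
the `M j` side have all arrived by time `j`, so both swapped matchings are again saturated
prefix matchings, on `n` and on `j` items respectively, and their total value is unchanged.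
Optimality of `M n` then forces the new matching on `j` items to have the value of `M j`, so by
uniqueness it equals `M j`; but it matches `l₀` to `c`.
-/

open Finset

/-- `g` is a saturated matching of the constraint vertices `L` into the first
`i` items (where `none` means a dummy zero-value item): each matched item has
arrived (index `< i`) and satisfies the property of its constraint vertex, and
no item is used twice. -/
def IsPrefixMatching {L : Type*} {n : ℕ} (P : L → Fin n → Prop) (i : ℕ)
    (g : L → Option (Fin n)) : Prop :=
  (∀ l c, g l = some c → P l c ∧ (c : ℕ) < i) ∧
  ∀ l l' c, g l = some c → g l' = some c → l = l'

/-- The value of a matching (dummies have value 0). -/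
def matchingValue {L : Type*} [Fintype L] {n : ℕ} (w : L → Fin n → ℝ)
    (g : L → Option (Fin n)) : ℝ :=
  ∑ l, (g l).elim 0 (w l)

section Exchange

variable {L : Type*} {n : ℕ} {P : L → Fin n → Prop} {i j : ℕ} {f g : L → Option (Fin n)}
  {S : Set L}

lemma IsPrefixMatching.piecewise [DecidablePred (· ∈ S)]
    (hf : IsPrefixMatching P i f) (hg : IsPrefixMatching P j g)
    (hlt : ∀ l ∈ S, ∀ c, g l = some c → (c : ℕ) < i)
    (hcross : ∀ l ∈ S, ∀ l' ∉ S, ∀ c, g l = some c → f l' ≠ some c) :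
    IsPrefixMatching P i (S.piecewise g f) := by
  refine ⟨fun l c hc => ?_, fun l l' c hl hl' => ?_⟩
  · by_cases hS : l ∈ S
    · rw [Set.piecewise_eq_of_mem _ _ _ hS] at hc
      exact ⟨(hg.1 l c hc).1, hlt l hS c hc⟩
    · rw [Set.piecewise_eq_of_notMem _ _ _ hS] at hc
      exact hf.1 l c hc
  · by_cases hS : l ∈ S <;> by_cases hS' : l' ∈ S <;>
      simp only [Set.piecewise, hS, hS', if_true, if_false] at hl hl'
    · exact hg.2 l l' c hl hl'
    · exact absurd hl' (hcross l hS l' hS' c hl)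
    · exact absurd hl (hcross l' hS' l hS c hl')
    · exact hf.2 l l' c hl hl'

lemma matchingValue_piecewise_add_piecewise [Fintype L] [DecidablePred (· ∈ S)]
    (w : L → Fin n → ℝ) :
    matchingValue w (S.piecewise g f) + matchingValue w (S.piecewise f g) =
      matchingValue w f + matchingValue w g := by
  simp only [matchingValue, ← Finset.sum_add_distrib]
  refine Finset.sum_congr rfl fun l _ => ?_
  by_cases hS : l ∈ S <;> simp [hS, add_comm]

end Exchange

section AlternatingPath

variable {L : Type*} {n : ℕ}

def AltStep (f g : L → Option (Fin n)) (l l' : L) : Prop :=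
  ∃ c, g l = some c ∧ f l' = some c

/-- The constraint vertices on the alternating path of `f △ g` that starts with the `f`-edge
at `l₀`. -/
def altPath (f g : L → Option (Fin n)) (l₀ : L) : Set L :=
  {l | Relation.ReflTransGen (AltStep f g) l₀ l}

variable {f g : L → Option (Fin n)} {l₀ l l' : L} {c₀ : Fin n}

lemma mem_altPath_self : l₀ ∈ altPath f g l₀ := Relation.ReflTransGen.refl

lemma mem_altPath_of_altStep (hl : l ∈ altPath f g l₀) (h : AltStep f g l l') :
    l' ∈ altPath f g l₀ :=
  Relation.ReflTransGen.tail hl h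

lemma exists_altStep_of_mem_altPath (hl : l ∈ altPath f g l₀) (hne : l ≠ l₀) :
    ∃ m ∈ altPath f g l₀, AltStep f g m l := by
  rcases Relation.ReflTransGen.cases_tail hl with h | ⟨m, hm, hstep⟩
  · exact absurd h hne
  · exact ⟨m, hm, hstep⟩

lemma mem_altPath_of_altStep_of_injective
    (hg : ∀ l l' c, g l = some c → g l' = some c → l = l')
    (hl₀ : f l₀ = some c₀) (hc₀ : ∀ l, g l ≠ some c₀)
    (hl : l ∈ altPath f g l₀) (h : AltStep f g l' l) : l' ∈ altPath f g l₀ := by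
  obtain ⟨c, hgl', hfl⟩ := h
  by_cases hne : l = l₀
  · subst hne
    obtain rfl : c = c₀ := Option.some.inj (hfl.symm.trans hl₀)
    exact absurd hgl' (hc₀ l')
  · obtain ⟨m, hm, d, hgm, hfl'⟩ := exists_altStep_of_mem_altPath hl hne
    obtain rfl : d = c := Option.some.inj (hfl'.symm.trans hfl)
    exact hg m l' d hgm hgl' ▸ hm

lemma lt_of_mem_altPath {i : ℕ} (hg : ∀ l c, g l = some c → (c : ℕ) < i)
    (hc₀ : (c₀ : ℕ) < i)
    (hl₀ : f l₀ = some c₀) (hl : l ∈ altPath f g l₀) {c : Fin n} (hfl : f l = some c) :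
    (c : ℕ) < i := by
  by_cases hne : l = l₀
  · subst hne
    obtain rfl : c = c₀ := Option.some.inj (hfl.symm.trans hl₀)
    exact hc₀
  · obtain ⟨m, -, d, hgm, hfl'⟩ := exists_altStep_of_mem_altPath hl hne
    obtain rfl : d = c := Option.some.inj (hfl'.symm.trans hfl)
    exact hg m d hgm

end AlternatingPath

theorem stmt6_general {L : Type*} [Fintype L] (n : ℕ) (P : L → Fin n → Prop)
    (w : L → Fin n → ℝ)
    (M : ℕ → L → Option (Fin n))
    (hM : ∀ i, IsPrefixMatching P i (M i))
    (hMopt : ∀ i g, IsPrefixMatching P i g → matchingValue w g ≤ matchingValue w (M i))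
    (hMuniq : ∀ i g, IsPrefixMatching P i g →
      matchingValue w g = matchingValue w (M i) → g = M i) :
    ∀ c : Fin n, (∃ l, M n l = some c) → ∃ l, M ((c : ℕ) + 1) l = some c := by
  classical
  rintro c ⟨l₀, hl₀⟩
  by_contra! hc
  set j := (c : ℕ) + 1
  set S := altPath (M n) (M j) l₀
  have hlarge : IsPrefixMatching P n (S.piecewise (M j) (M n)) :=
    (hM n).piecewise (hM j) (fun l _ d hd => ((hM j).1 l d hd).2.trans_le c.isLt)
      (fun l hl l' hl' d hd hd' => hl' (mem_altPath_of_altStep hl ⟨d, hd, hd'⟩))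
  have hsmall : IsPrefixMatching P j (S.piecewise (M n) (M j)) :=
    (hM j).piecewise (hM n)
      (fun l hl d hd => lt_of_mem_altPath (fun l d hd => ((hM j).1 l d hd).2)
        (Nat.lt_succ_self c) hl₀ hl hd)
      (fun l hl l' hl' d hd hd' =>
        hl' (mem_altPath_of_altStep_of_injective (hM j).2 hl₀ hc hl ⟨d, hd', hd⟩))
  have hswap := matchingValue_piecewise_add_piecewise (S := S) (f := M n) (g := M j) w
  have hsmall_eq : S.piecewise (M n) (M j) = M j :=
    hMuniq j _ hsmall (le_antisymm (hMopt j _ hsmall) (by linarith [hMopt n _ hlarge]))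
  have hl₀' := congrFun hsmall_eq l₀
  rw [Set.piecewise_eq_of_mem _ _ _ mem_altPath_self, hl₀] at hl₀'
  exact hc l₀ hl₀'.symm

/-- if `M i` is, for each prefix length `i`, the unique
maximum-weight saturated matching on the first `i` items, and every item
matched by the global optimum `M n` arrives after position `i₀`, then every
item `c` matched by `M n` is matched in `M (c+1)` at its arrival time — hence
is retained by the greedy rule. -/
theorem stmt6 {L : Type*} [Fintype L] (n : ℕ) (P : L → Fin n → Prop)
    (w : L → Fin n → ℝ) (hw : ∀ l c, 0 ≤ w l c ∧ w l c ≤ 1)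
    (M : ℕ → L → Option (Fin n))
    (hM : ∀ i, IsPrefixMatching P i (M i))
    (hMopt : ∀ i g, IsPrefixMatching P i g → matchingValue w g ≤ matchingValue w (M i))
    (hMuniq : ∀ i g, IsPrefixMatching P i g →
      matchingValue w g = matchingValue w (M i) → g = M i)
    (i₀ : ℕ)
    (hlate : ∀ l c, M n l = some c → i₀ ≤ (c : ℕ)) :
    ∀ c : Fin n, (∃ l, M n l = some c) → ∃ l, M ((c : ℕ) + 1) l = some c :=
  stmt6_general n P w M hM hMopt hMuniq
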